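/- arXiv:1804.03051 — 4 statements merged into one kernel-verified Lean document; each statement's English description precedes it below -/
import Mathlib

section
/- Let (X, d) be a metric space and let a, b, c, i be four pairwise distinct points of X. Suppose Δ(a,b,c) is the strictly smallest Gromov product at the vertex a; that is, for all j, k distinct from each other and from a with {j,k} ≠ {b,c}, one has Δ(a,b,c) < Δ(a,j,k). Then Δ(b,a,i) < Δ(b,c,i) and Δ(b,a,i) < Δ(b,a,c); in particular, neither Δ(b,c,i) nor Δ(b,a,c) is the smallest Gromov product at the vertex b. -/
/-- The Gromov product of the triangle with vertices `x`, `y`, `z`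
at the vertex `x`. -/
noncomputable def gromov {X : Type*} [MetricSpace X] (x y z : X) : ℝ :=
  (dist x y + dist x z - dist y z) / 2

theorem not_minimal_at_b {X : Type*} [MetricSpace X]
    (a b c i : X) (hab : a ≠ b) (hac : a ≠ c) (hai : a ≠ i)
    (hbc : b ≠ c) (hbi : b ≠ i) (hci : c ≠ i)
    (hmin : ∀ j k : X, j ≠ k → j ≠ a → k ≠ a → ({j, k} : Set X) ≠ {b, c} →
      gromov a b c < gromov a j k) :
    gromov b a i < gromov b c i ∧ gromov b a i < gromov b a c := by
  have h1 : gromov a b c < gromov a c i := by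
    apply hmin c i hci hac.symm hai.symm
    intro h
    have : b ∈ ({c, i} : Set X) := h ▸ (by simp)
    simp only [Set.mem_insert_iff, Set.mem_singleton_iff] at this
    rcases this with h' | h' <;> [exact hbc h'; exact hbi h']
  have h2 : gromov a b c < gromov a b i := by
    apply hmin b i hbi hab.symm hai.symm
    intro h
    have : c ∈ ({b, i} : Set X) := h ▸ (by simp)
    simp only [Set.mem_insert_iff, Set.mem_singleton_iff] at this
    rcases this with h' | h' <;> [exact hbc h'.symm; exact hci h']
  simp only [gromov] at *
  rw [dist_comm b a, dist_comm b c, dist_comm c i, dist_comm a i] at *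
  constructor <;> linarith
end

section
/- Let (X, d) be a metric space and let a, b, c, i be four pairwise distinct points of X. Suppose Δ(a,b,c) is the strictly smallest Gromov product at the vertex a; that is, for all j, k distinct from each other and from a with {j,k} ≠ {b,c}, one has Δ(a,b,c) < Δ(a,j,k). Then Δ(i,b,c) < Δ(i,a,c) and Δ(i,b,c) < Δ(i,a,b); in particular, neither Δ(i,a,c) nor Δ(i,a,b) is the smallest Gromov product at the vertex i. -/
theorem not_minimal_at_i {X : Type*} [MetricSpace X]
    (a b c i : X) (hab : a ≠ b) (hac : a ≠ c) (hai : a ≠ i)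
    (hbc : b ≠ c) (hbi : b ≠ i) (hci : c ≠ i)
    (hmin : ∀ j k : X, j ≠ k → j ≠ a → k ≠ a → ({j, k} : Set X) ≠ {b, c} →
      gromov a b c < gromov a j k) :
    gromov i b c < gromov i a c ∧ gromov i b c < gromov i a b := by
  have h1 : gromov a b c < gromov a b i := by
    apply hmin b i hbi hab.symm hai.symm
    intro h
    have : i ∈ ({b, c} : Set X) := h ▸ (by simp)
    rcases this with h | h
    · exact hbi h.symm
    · exact hci h.symm
  have h2 : gromov a b c < gromov a c i := by
    apply hmin c i hci hac.symm hai.symm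
    intro h
    have : i ∈ ({b, c} : Set X) := h ▸ (by simp)
    rcases this with h | h
    · exact hbi h.symm
    · exact hci h.symm
  simp only [gromov] at *
  have dab : dist a b = dist b a := dist_comm a b
  have dac : dist a c = dist c a := dist_comm a c
  have dai : dist a i = dist i a := dist_comm a i
  have dbi : dist b i = dist i b := dist_comm b i
  have dci : dist c i = dist i c := dist_comm c i
  have dbc : dist b c = dist c b := dist_comm b c
  constructor <;> linarith
end

section
/- Let (X, d) be a metric space with four pairwise distinct points P₁, P₂, P₃, P₄ that is Δ-generic, meaning that at each point Pₐ the three Gromov products Δ(Pₐ, Pⱼ, Pₖ) over unordered pairs {j,k} ⊆ {1,2,3,4} \ {a} are pairwise distinct (so there is a unique smallest one). If the smallest Gromov product at P₁ is Δ(P₁,P₂,P₄), then the smallest Gromov product at P₂ is Δ(P₂,P₁,P₃), the smallest at P₃ is Δ(P₃,P₂,P₄), and the smallest at P₄ is Δ(P₄,P₁,P₃). In other words, up to permutation of the points there is a unique Gromov product structure on a Δ-generic 4-point metric space. -/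
/-- Up to permutation of the points, there is a unique Gromov product
structure on a Δ-generic 4-point metric space. -/
theorem four_point_unique_structure {X : Type*} [MetricSpace X]
    (P₁ P₂ P₃ P₄ : X)
    (h12 : P₁ ≠ P₂) (h13 : P₁ ≠ P₃) (h14 : P₁ ≠ P₄)
    (h23 : P₂ ≠ P₃) (h24 : P₂ ≠ P₄) (h34 : P₃ ≠ P₄)
    -- Δ-genericity: at each point the three Gromov products are pairwise distinct
    (hgen₁ : gromov P₁ P₂ P₃ ≠ gromov P₁ P₂ P₄ ∧
             gromov P₁ P₂ P₃ ≠ gromov P₁ P₃ P₄ ∧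
             gromov P₁ P₂ P₄ ≠ gromov P₁ P₃ P₄)
    (hgen₂ : gromov P₂ P₁ P₃ ≠ gromov P₂ P₁ P₄ ∧
             gromov P₂ P₁ P₃ ≠ gromov P₂ P₃ P₄ ∧
             gromov P₂ P₁ P₄ ≠ gromov P₂ P₃ P₄)
    (hgen₃ : gromov P₃ P₁ P₂ ≠ gromov P₃ P₁ P₄ ∧
             gromov P₃ P₁ P₂ ≠ gromov P₃ P₂ P₄ ∧
             gromov P₃ P₁ P₄ ≠ gromov P₃ P₂ P₄)
    (hgen₄ : gromov P₄ P₁ P₂ ≠ gromov P₄ P₁ P₃ ∧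
             gromov P₄ P₁ P₂ ≠ gromov P₄ P₂ P₃ ∧
             gromov P₄ P₁ P₃ ≠ gromov P₄ P₂ P₃)
    -- the smallest Gromov product at P₁ is Δ(P₁,P₂,P₄)
    (hmin₁ : gromov P₁ P₂ P₄ < gromov P₁ P₂ P₃ ∧
             gromov P₁ P₂ P₄ < gromov P₁ P₃ P₄) :
    -- the smallest at P₂ is Δ(P₂,P₁,P₃)
    (gromov P₂ P₁ P₃ < gromov P₂ P₁ P₄ ∧
     gromov P₂ P₁ P₃ < gromov P₂ P₃ P₄) ∧
    -- the smallest at P₃ is Δ(P₃,P₂,P₄)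
    (gromov P₃ P₂ P₄ < gromov P₃ P₁ P₂ ∧
     gromov P₃ P₂ P₄ < gromov P₃ P₁ P₄) ∧
    -- the smallest at P₄ is Δ(P₄,P₁,P₃)
    (gromov P₄ P₁ P₃ < gromov P₄ P₁ P₂ ∧
     gromov P₄ P₁ P₃ < gromov P₄ P₂ P₃) := by
  obtain ⟨ha, hb⟩ := hmin₁
  simp only [gromov] at *
  have c12 : dist P₂ P₁ = dist P₁ P₂ := dist_comm _ _
  have c13 : dist P₃ P₁ = dist P₁ P₃ := dist_comm _ _
  have c14 : dist P₄ P₁ = dist P₁ P₄ := dist_comm _ _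
  have c23 : dist P₃ P₂ = dist P₂ P₃ := dist_comm _ _
  have c24 : dist P₄ P₂ = dist P₂ P₄ := dist_comm _ _
  have c34 : dist P₄ P₃ = dist P₃ P₄ := dist_comm _ _
  refine ⟨⟨?_, ?_⟩, ⟨?_, ?_⟩, ⟨?_, ?_⟩⟩ <;> linarith
end

section
/- Let (X, d) be a metric space and let a, b, c, i be four pairwise distinct points of X. If Δ(a,b,c) < Δ(a,b,i) and Δ(a,b,c) < Δ(a,c,i), then Δ(c,a,i) is strictly smaller than both Δ(c,b,i) and Δ(c,a,b), Δ(b,a,i) is strictly smaller than both Δ(b,c,i) and Δ(b,a,c), and Δ(i,b,c) is strictly smaller than both Δ(i,a,c) and Δ(i,a,b). -/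
theorem gromov_lt_of_min_both {X : Type*} [MetricSpace X]
    (a b c i : X) (hab : a ≠ b) (hac : a ≠ c) (hai : a ≠ i)
    (hbc : b ≠ c) (hbi : b ≠ i) (hci : c ≠ i)
    (h1 : gromov a b c < gromov a b i) (h2 : gromov a b c < gromov a c i) :
    (gromov c a i < gromov c b i ∧ gromov c a i < gromov c a b) ∧
    (gromov b a i < gromov b c i ∧ gromov b a i < gromov b a c) ∧
    (gromov i b c < gromov i a c ∧ gromov i b c < gromov i a b) := by
  simp only [gromov, dist_comm b a, dist_comm c a, dist_comm i a, dist_comm c b,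
    dist_comm i b, dist_comm i c] at *
  refine ⟨⟨by linarith, by linarith⟩, ⟨by linarith, by linarith⟩, by linarith, by linarith⟩
end
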